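/- Let T = O_q(M(k,p))[y^{±1}; σ] with k ≥ 2, q not a root of unity, σ(x_{ij}) = q x_{ij}. Define T_1 = {a ∈ T : y a y^{-1} = q a} and T^{(i)} = {a ∈ T : z a z^{-1} = q^{-i} a} where z = [1,...,k | p+1−k,...,p] is the quantum minor using all rows and the last k columns (assume k ≤ p so z is defined). Then (T^{(0)} ∪ T^{(1)}) ∩ T_1 ⊆ O_q(M(k,p)). -/

import Mathlib

/-!
Conjugation by `y` and by `z` acts diagonally on the monomial basis `x^a y^s`: by `q^{|a|}`
and by `q^{-(d + k s)}`, where `|a|` is the total degree of `a` and `d` its degree in the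
first `p - k` columns. Since `q` is not a root of unity, an eigenvector of both conjugations is a
combination of monomials sharing these exponents. Here `|a| = 1` forces `0 ≤ d ≤ 1`, and
`d + k s ∈ {0, 1}` with `k ≥ 2` then forces `s = 0`, so no power of `y` occurs.
-/

open Module

lemma zpow_injective_of_pow_ne_one {G₀ : Type*} [GroupWithZero G₀] {q : G₀} (hq0 : q ≠ 0)
    (hq : ∀ m : ℕ, 0 < m → q ^ m ≠ 1) : Function.Injective (q ^ · : ℤ → G₀) := by
  have hinj : Function.Injective fun n : ℤ => Units.mk0 q hq0 ^ n := by
    rw [injective_zpow_iff_not_isOfFinOrder, isOfFinOrder_iff_pow_eq_one]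
    rintro ⟨m, hm, h⟩
    exact hq m hm (by simpa [Units.ext_iff] using h)
  intro m n h
  exact hinj (Units.ext (by simpa using h))

lemma Finset.prod_zpow_eq_zpow_sum₀ {ι G₀ : Type*} [CommGroupWithZero G₀] {q : G₀} (hq : q ≠ 0)
    (s : Finset ι) (f : ι → ℤ) : ∏ i ∈ s, q ^ f i = q ^ ∑ i ∈ s, f i := by
  classical
  induction s using Finset.induction_on with
  | empty => simp
  | insert i s hi ih => rw [prod_insert hi, sum_insert hi, ih, zpow_add₀ hq]

lemma Module.Basis.eq_of_mem_support_of_apply_eq_smul {ι R M : Type*} [CommRing R] [IsDomain R]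
    [AddCommGroup M] [Module R M] (B : Basis ι R M) {f : M →ₗ[R] M} {μ : ι → R}
    (hf : ∀ v, f (B v) = μ v • B v) {a : M} {c : R} (ha : f a = c • a) {v : ι}
    (hv : v ∈ (B.repr a).support) : μ v = c := by
  have hcoord : B.coord v ∘ₗ f = μ v • B.coord v := B.ext fun w => by
    by_cases hw : w = v
    · subst hw; simp [hf]
    · simp [hf, Ne.symm hw]
  have h := congrArg (B.repr · v) ha
  have h' := LinearMap.congr_fun hcoord a
  simp only [LinearMap.comp_apply, Basis.coord_apply, LinearMap.smul_apply, smul_eq_mul,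
    map_smul, Finsupp.smul_apply] at h h'
  exact mul_right_cancel₀ (Finsupp.mem_support_iff.mp hv) (h'.symm.trans h)

section ConjEigen
variable {K T : Type*} [Field K] [Ring T] [Algebra K T]

/-- Zero is allowed, so `IsConjEigen u c` describes an eigenspace of `a ↦ u a u⁻¹`. -/
def IsConjEigen (u : Tˣ) (c : K) (a : T) : Prop := (u : T) * a * ↑u⁻¹ = c • a

namespace IsConjEigen
variable {u : Tˣ} {c d : K} {a b : T}

lemma of_units_mul_eq_smul (h : (u : T) * a = c • (a * u)) : IsConjEigen u c a := by
  rw [IsConjEigen, h, smul_mul_assoc, mul_assoc, Units.mul_inv, mul_one]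

lemma of_mul_units_eq_smul (hc : c ≠ 0) (h : a * u = c • ((u : T) * a)) :
    IsConjEigen u c⁻¹ a :=
  of_units_mul_eq_smul <| by rw [h, smul_smul, inv_mul_cancel₀ hc, one_smul]

lemma mul (ha : IsConjEigen u c a) (hb : IsConjEigen u d b) :
    IsConjEigen u (c * d) (a * b) := by
  have : (u : T) * (a * b) * ↑u⁻¹ = (u * a * ↑u⁻¹) * (u * b * ↑u⁻¹) := by
    simp only [mul_assoc, Units.inv_mul_cancel_left]
  rw [IsConjEigen, this, ha, hb, smul_mul_smul_comm]

lemma pow (ha : IsConjEigen u c a) (n : ℕ) : IsConjEigen u (c ^ n) (a ^ n) := by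
  induction n with
  | zero => simp [IsConjEigen]
  | succ n ih => rw [pow_succ, pow_succ]; exact ih.mul ha

lemma list_ofFn_prod {n : ℕ} {f : Fin n → T} {χ : Fin n → K}
    (h : ∀ i, IsConjEigen u (χ i) (f i)) : IsConjEigen u (∏ i, χ i) (List.ofFn f).prod := by
  induction n with
  | zero => simp [IsConjEigen]
  | succ n ih =>
    rw [List.ofFn_succ, List.prod_cons, Fin.prod_univ_succ]
    exact (h 0).mul (ih fun i => h i.succ)

lemma units_inv {w : Tˣ} (hc : c ≠ 0) (hw : IsConjEigen u c (w : T)) :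
    IsConjEigen u c⁻¹ (↑w⁻¹ : T) := by
  have hprod : (c • (w : T)) * (u * ↑w⁻¹ * ↑u⁻¹) = 1 := by
    rw [← hw]; simp [mul_assoc]
  calc (u : T) * ↑w⁻¹ * ↑u⁻¹
      = (c⁻¹ • (↑w⁻¹ : T)) * ((c • (w : T)) * (u * ↑w⁻¹ * ↑u⁻¹)) := by
        rw [← mul_assoc, smul_mul_smul_comm, inv_mul_cancel₀ hc, Units.inv_mul, one_smul,
          one_mul]
    _ = c⁻¹ • (↑w⁻¹ : T) := by rw [hprod, mul_one]

lemma units_zpow {w : Tˣ} (hc : c ≠ 0) (hw : IsConjEigen u c (w : T)) (s : ℤ) :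
    IsConjEigen u (c ^ s) (↑(w ^ s) : T) := by
  obtain ⟨n, rfl | rfl⟩ := s.eq_nat_or_neg
  · simpa using hw.pow n
  · simpa [inv_pow] using (hw.units_inv hc).pow n

lemma ordered_monomial {k p : ℕ} {q : K} (hq0 : q ≠ 0) {x : Fin k → Fin p → T}
    {e : Fin k → Fin p → ℤ} (hx : ∀ i j, IsConjEigen u (q ^ e i j) (x i j)) {w : Tˣ} {d : ℤ}
    (hw : IsConjEigen u (q ^ d) (w : T)) (a : Fin k → Fin p → ℕ) (s : ℤ) :
    IsConjEigen u (q ^ (∑ i, ∑ j, e i j * a i j + d * s))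
      ((List.ofFn fun i => (List.ofFn fun j => x i j ^ a i j).prod).prod * ↑(w ^ s)) := by
  have h := (list_ofFn_prod fun i => list_ofFn_prod fun j => (hx i j).pow (a i j)).mul
    (hw.units_zpow (zpow_ne_zero d hq0) s)
  convert h using 1
  simp only [← zpow_natCast, ← zpow_mul, Finset.prod_zpow_eq_zpow_sum₀ hq0, zpow_add₀ hq0]

lemma eq_of_mem_repr_support {ι : Type*} (B : Basis ι K T) {μ : ι → K}
    (hB : ∀ v, IsConjEigen u (μ v) (B v)) (ha : IsConjEigen u c a) {v : ι}
    (hv : v ∈ (B.repr a).support) : μ v = c :=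
  B.eq_of_mem_support_of_apply_eq_smul (f := LinearMap.mulLeftRight K ((u : T), (↑u⁻¹ : T)))
    hB ha hv

end IsConjEigen

end ConjEigen

lemma ordered_monomial_mem_adjoin {K T : Type*} [CommSemiring K] [Semiring T] [Algebra K T]
    {k p : ℕ} (x : Fin k → Fin p → T) (a : Fin k → Fin p → ℕ) :
    (List.ofFn fun i => (List.ofFn fun j => x i j ^ a i j).prod).prod ∈
      Algebra.adjoin K (Set.range fun ij : Fin k × Fin p => x ij.1 ij.2) := by
  refine Subalgebra.list_prod_mem _ fun _ hr => ?_
  obtain ⟨i, rfl⟩ := List.mem_ofFn.mp hr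
  refine Subalgebra.list_prod_mem _ fun _ hs => ?_
  obtain ⟨j, rfl⟩ := List.mem_ofFn.mp hs
  exact pow_mem (Algebra.subset_adjoin (Set.mem_range_self (i, j))) _

section QuantumMatrices
variable {K T : Type*} [Field K] [Ring T] [Algebra K T] {q : K} {k p : ℕ}
  {x : Fin k → Fin p → T} {y z : Tˣ} {B : Basis ((Fin k → Fin p → ℕ) × ℤ) K T}

def degreeBelowColumn (c : ℕ) (a : Fin k → Fin p → ℕ) : ℕ :=
  ∑ i : Fin k, ∑ j : Fin p, if (j : ℕ) < c then a i j else 0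

lemma degreeBelowColumn_le (c : ℕ) (a : Fin k → Fin p → ℕ) :
    degreeBelowColumn c a ≤ ∑ i, ∑ j, a i j := by
  unfold degreeBelowColumn
  gcongr with i _ j _
  split_ifs <;> simp

lemma isConjEigen_y_basis (hq0 : q ≠ 0)
    (hB : ∀ v : (Fin k → Fin p → ℕ) × ℤ,
      B v = (List.ofFn fun i : Fin k =>
        (List.ofFn fun j : Fin p => x i j ^ v.1 i j).prod).prod * ((y ^ v.2 : Tˣ) : T))
    (hyx : ∀ i j, (y : T) * x i j = q • (x i j * (y : T)))
    (v : (Fin k → Fin p → ℕ) × ℤ) :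
    IsConjEigen y (q ^ (∑ i, ∑ j, (v.1 i j : ℤ))) (B v) := by
  have hx (i : Fin k) (j : Fin p) : IsConjEigen y (q ^ (1 : ℤ)) (x i j) := by
    simpa using IsConjEigen.of_units_mul_eq_smul (hyx i j)
  have hy : IsConjEigen y (q ^ (0 : ℤ)) (y : T) := by simp [IsConjEigen]
  simpa [← hB v] using IsConjEigen.ordered_monomial hq0 hx hy v.1 v.2

lemma isConjEigen_z_basis (hq0 : q ≠ 0)
    (hB : ∀ v : (Fin k → Fin p → ℕ) × ℤ,
      B v = (List.ofFn fun i : Fin k =>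
        (List.ofFn fun j : Fin p => x i j ^ v.1 i j).prod).prod * ((y ^ v.2 : Tˣ) : T))
    (hzx₁ : ∀ (i : Fin k) (j : Fin p), p - k ≤ (j : ℕ) → x i j * (z : T) = (z : T) * x i j)
    (hzx₂ : ∀ (i : Fin k) (j : Fin p), (j : ℕ) < p - k →
      x i j * (z : T) = q • ((z : T) * x i j))
    (hyz : (y : T) * (z : T) = q ^ k • ((z : T) * (y : T))) (v : (Fin k → Fin p → ℕ) × ℤ) :
    IsConjEigen z (q ^ (-(degreeBelowColumn (p - k) v.1 + k * v.2 : ℤ))) (B v) := by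
  have hx (i : Fin k) (j : Fin p) :
      IsConjEigen z (q ^ (if (j : ℕ) < p - k then -1 else 0 : ℤ)) (x i j) := by
    by_cases hj : (j : ℕ) < p - k
    · simpa [hj] using IsConjEigen.of_mul_units_eq_smul hq0 (hzx₂ i j hj)
    · simpa [hj, IsConjEigen] using
        Units.commute_iff_mul_inv_cancel.mp (hzx₁ i j (not_lt.mp hj)).symm
  have hy : IsConjEigen z (q ^ (-k : ℤ)) (y : T) := by
    simpa using IsConjEigen.of_mul_units_eq_smul (pow_ne_zero k hq0) hyz
  convert hB v ▸ IsConjEigen.ordered_monomial hq0 hx hy v.1 v.2 using 3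
  simp [degreeBelowColumn, ite_mul, ← Finset.sum_neg_distrib, apply_ite Neg.neg]
  ring

end QuantumMatrices

lemma Int.eq_zero_of_add_mul_eq_zero_or_one {d k s : ℤ} (hk : 2 ≤ k) (hd₀ : 0 ≤ d)
    (hd₁ : d ≤ 1) (h : d + k * s = 0 ∨ d + k * s = 1) : s = 0 := by
  rcases lt_trichotomy s 0 with hs | hs | hs <;> [skip; exact hs; skip] <;>
    rcases h with h | h <;> nlinarith

theorem deg_one_eigenvectors_lie_in_quantum_matrices_general
    {K : Type*} [Field K] {T : Type*} [Ring T] [Algebra K T]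
    (q : K) (hq0 : q ≠ 0) (hq : ∀ m : ℕ, 0 < m → q ^ m ≠ 1)
    (k p : ℕ) (hk : 2 ≤ k)
    (x : Fin k → Fin p → T) (y z : Tˣ)
    (B : Module.Basis ((Fin k → Fin p → ℕ) × ℤ) K T)
    (hB : ∀ v : (Fin k → Fin p → ℕ) × ℤ,
      B v = (List.ofFn fun i : Fin k =>
          (List.ofFn fun j : Fin p => x i j ^ v.1 i j).prod).prod * ((y ^ v.2 : Tˣ) : T))
    (hyx : ∀ i j, (y : T) * x i j = q • (x i j * (y : T)))
    (hzx₁ : ∀ (i : Fin k) (j : Fin p), p - k ≤ (j : ℕ) → x i j * (z : T) = (z : T) * x i j)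
    (hzx₂ : ∀ (i : Fin k) (j : Fin p), (j : ℕ) < p - k →
      x i j * (z : T) = q • ((z : T) * x i j))
    (hyz : (y : T) * (z : T) = q ^ k • ((z : T) * (y : T))) :
    ∀ a : T,
      ((z : T) * a * (↑z⁻¹ : T) = a ∨ (z : T) * a * (↑z⁻¹ : T) = q⁻¹ • a) →
      (y : T) * a * (↑y⁻¹ : T) = q • a →
      a ∈ Algebra.adjoin K (Set.range fun ij : Fin k × Fin p => x ij.1 ij.2) := by
  intro a hz hy
  have hinj := zpow_injective_of_pow_ne_one hq0 hq
  have hsupp : ∀ v ∈ (B.repr a).support, v.2 = 0 := by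
    intro v hv
    have hdeg : ∑ i, ∑ j, (v.1 i j : ℤ) = 1 := hinj <|
      (IsConjEigen.eq_of_mem_repr_support B (isConjEigen_y_basis hq0 hB hyx) hy hv).trans
        (zpow_one q).symm
    have hμ := fun (n : ℤ) (h : IsConjEigen z (q ^ n) a) => IsConjEigen.eq_of_mem_repr_support B
      (isConjEigen_z_basis hq0 hB hzx₁ hzx₂ hyz) h hv
    have hzdeg := hz.imp (fun h => hinj (hμ 0 (by rwa [IsConjEigen, zpow_zero, one_smul])))
      (fun h => hinj (hμ (-1) (by rwa [IsConjEigen, zpow_neg_one])))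
    have hd := (degreeBelowColumn_le (p - k) v.1).trans (by exact_mod_cast hdeg.le)
    exact Int.eq_zero_of_add_mul_eq_zero_or_one (d := degreeBelowColumn (p - k) v.1) (k := k)
      (by exact_mod_cast hk) (by positivity) (by exact_mod_cast hd) (by omega)
  refine (Submodule.span_le (p := (Algebra.adjoin K _).toSubmodule)).mpr ?_
    (B.mem_span_repr_support a)
  rintro _ ⟨v, hv, rfl⟩
  simpa [hB v, hsupp v hv] using ordered_monomial_mem_adjoin x v.1

/-- let `T = O_q(M(k,p))[y^{±1}; σ]` with `k ≥ 2`, `k ≤ p`, `q` not a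
root of unity, and let `z = [1,…,k ∣ p+1−k,…,p]` be the quantum minor on all rows
and the last `k` columns.  With `T₁ = {a : y a y⁻¹ = q a}` and
`T^{(i)} = {a : z a z⁻¹ = q^{−i} a}`, one has `(T^{(0)} ∪ T^{(1)}) ∩ T₁ ⊆ O_q(M(k,p))`.
Here `T` is presented abstractly by its monomial basis `x^{a} y^{s}` together with
the commutation rules of `y` and `z` with the generators. -/
theorem deg_one_eigenvectors_lie_in_quantum_matrices
    {K : Type*} [Field K] {T : Type*} [Ring T] [Algebra K T]
    (q : K) (hq0 : q ≠ 0) (hq : ∀ m : ℕ, 0 < m → q ^ m ≠ 1)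
    (k p : ℕ) (hk : 2 ≤ k) (hkp : k ≤ p)
    (x : Fin k → Fin p → T) (y z : Tˣ)
    (B : Module.Basis ((Fin k → Fin p → ℕ) × ℤ) K T)
    (hB : ∀ v : (Fin k → Fin p → ℕ) × ℤ,
      B v = (List.ofFn fun i : Fin k =>
          (List.ofFn fun j : Fin p => x i j ^ v.1 i j).prod).prod * ((y ^ v.2 : Tˣ) : T))
    (hyx : ∀ i j, (y : T) * x i j = q • (x i j * (y : T)))
    (hzx₁ : ∀ (i : Fin k) (j : Fin p), p - k ≤ (j : ℕ) → x i j * (z : T) = (z : T) * x i j)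
    (hzx₂ : ∀ (i : Fin k) (j : Fin p), (j : ℕ) < p - k →
      x i j * (z : T) = q • ((z : T) * x i j))
    (hyz : (y : T) * (z : T) = q ^ k • ((z : T) * (y : T))) :
    ∀ a : T,
      ((z : T) * a * (↑z⁻¹ : T) = a ∨ (z : T) * a * (↑z⁻¹ : T) = q⁻¹ • a) →
      (y : T) * a * (↑y⁻¹ : T) = q • a →
      a ∈ Algebra.adjoin K (Set.range fun ij : Fin k × Fin p => x ij.1 ij.2) :=
  deg_one_eigenvectors_lie_in_quantum_matrices_general q hq0 hq k p hk x y z B hB hyx hzx₁ hzx₂ hyz
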